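/- arXiv:1702.05934 — 2 statements merged into one kernel-verified Lean document; each statement's English description precedes it below -/
import Mathlib

section
/- Let θ ∈ ℝ^n be a vector each of whose entries θ_i is 0 or 1, let Θ = Diag(θ) and Σ = I_n − Θ. Then for any matrix H ∈ ℝ^{m×n}, I_n − [Θ Hᵀ]([Θ; H][Θ Hᵀ])†[Θ; H] = Σ − ΣHᵀ(HΣHᵀ)†HΣ, where [Θ; H] denotes Θ stacked on top of H. -/
/-!
Both sides are `1` minus the orthogonal projection onto the column space of `[Θ Hᵀ]`. On the
left this is the projection `Aᵀ (A Aᵀ)† A` onto the row space of `A = [Θ; H]`. On the right, that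
space splits orthogonally as `range Θ ⊕ range ((1 - Θ) Hᵀ)`, with projections `Θ` and
`(1 - Θ) Hᵀ (H (1 - Θ) Hᵀ)† H (1 - Θ)`. An orthogonal projection is determined by its range.
-/

open Matrix

/-- The four Moore–Penrose conditions characterizing the pseudo-inverse `P` of a real
square-indexed matrix `N`. -/
def IsMoorePenroseInv {k : Type*} [Fintype k] (N P : Matrix k k ℝ) : Prop :=
  N * P * N = N ∧ P * N * P = P ∧ (N * P)ᵀ = N * P ∧ (P * N)ᵀ = P * N

namespace IsMoorePenroseInv

variable {k : Type*} [Fintype k] {N P P' : Matrix k k ℝ}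

theorem unique (hP : IsMoorePenroseInv N P) (hP' : IsMoorePenroseInv N P') : P = P' := by
  obtain ⟨h₁, h₂, h₃, h₄⟩ := hP
  obtain ⟨g₁, g₂, g₃, g₄⟩ := hP'
  have hNP : N * P = N * P' :=
    calc N * P = (N * P' * N * P)ᵀ := by rw [g₁, h₃]
      _ = (N * P)ᵀ * (N * P')ᵀ := by rw [← transpose_mul]; simp only [Matrix.mul_assoc]
      _ = N * P * N * P' := by rw [h₃, g₃]; simp only [Matrix.mul_assoc]
      _ = N * P' := by rw [h₁]
  have hPN : P * N = P' * N :=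
    calc P * N = (P * (N * P' * N))ᵀ := by rw [g₁, h₄]
      _ = (P' * N)ᵀ * (P * N)ᵀ := by rw [← transpose_mul]; simp only [Matrix.mul_assoc]
      _ = P' * (N * P * N) := by rw [h₄, g₄]; simp only [Matrix.mul_assoc]
      _ = P' * N := by rw [h₁]
  calc P = P * N * P := h₂.symm
    _ = P' * N * P' := by rw [hPN, Matrix.mul_assoc, hNP, ← Matrix.mul_assoc]
    _ = P' := g₂

theorem transpose (hP : IsMoorePenroseInv N P) : IsMoorePenroseInv Nᵀ Pᵀ := by
  obtain ⟨h₁, h₂, h₃, h₄⟩ := hP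
  refine ⟨?_, ?_, ?_, ?_⟩
  · rw [← transpose_mul, ← transpose_mul, ← Matrix.mul_assoc, h₁]
  · rw [← transpose_mul, ← transpose_mul, ← Matrix.mul_assoc, h₂]
  · rwa [← transpose_mul, h₄]
  · rwa [← transpose_mul, h₃]

theorem isSymm (hN : N.IsSymm) (hP : IsMoorePenroseInv N P) : P.IsSymm :=
  (hN.eq ▸ hP.transpose).unique hP

theorem transpose_mul_mul_gram {b : Type*} [Fintype b] {B : Matrix k b ℝ}
    (hP : IsMoorePenroseInv (B * Bᵀ) P) : Bᵀ * P * (B * Bᵀ) = Bᵀ := by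
  classical
  have h : B * Bᵀ * (P * (B * Bᵀ) - 1) = 0 := by
    rw [Matrix.mul_sub, Matrix.mul_one, ← Matrix.mul_assoc, hP.1, sub_self]
  -- over `ℝ`, `B Bᵀ Z = 0` forces `Bᵀ Z = 0`
  have h' := (self_mul_conjTranspose_mul_eq_zero B _).mp h
  rwa [conjTranspose_eq_transpose_of_trivial, Matrix.mul_sub, Matrix.mul_one, sub_eq_zero,
    ← Matrix.mul_assoc] at h'

end IsMoorePenroseInv

/-- Over `ℝ`: `P` is the orthogonal projection onto the column space of `B`. -/
structure IsOrthProjOnto {R n k : Type*} [CommSemiring R] [Fintype n] [Fintype k]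
    (P : Matrix n n R) (B : Matrix n k R) : Prop where
  isSymm : P.IsSymm
  mul_eq : P * B = B
  exists_eq_mul : ∃ X : Matrix k n R, P = B * X

namespace IsOrthProjOnto

variable {R n k : Type*} [Fintype n] [Fintype k]

theorem unique [CommSemiring R] {P Q : Matrix n n R} {B : Matrix n k R}
    (hP : IsOrthProjOnto P B) (hQ : IsOrthProjOnto Q B) : P = Q := by
  obtain ⟨X, hPX⟩ := hP.exists_eq_mul
  obtain ⟨Y, hQY⟩ := hQ.exists_eq_mul
  have hQP : Q * P = P := by rw [hPX, ← Matrix.mul_assoc, hQ.mul_eq]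
  have hPQ : P * Q = Q := by rw [hQY, ← Matrix.mul_assoc, hP.mul_eq]
  calc P = (Q * P)ᵀ := by rw [hQP, hP.isSymm.eq]
    _ = P * Q := by rw [transpose_mul, hP.isSymm.eq, hQ.isSymm.eq]
    _ = Q := hPQ

theorem add_fromCols [CommRing R] [DecidableEq n] {m : Type*} [Fintype m] {Θ P : Matrix n n R}
    (hΘ : Θ.IsSymm) (hΘ₂ : IsIdempotentElem Θ) {H : Matrix m n R}
    (hP : IsOrthProjOnto P ((1 - Θ) * Hᵀ)) : IsOrthProjOnto (Θ + P) (fromCols Θ Hᵀ) := by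
  obtain ⟨X, hPX⟩ := hP.exists_eq_mul
  have hΘP : Θ * P = 0 := by
    rw [hPX, ← Matrix.mul_assoc, ← Matrix.mul_assoc, hΘ₂.mul_one_sub_self, Matrix.zero_mul,
      Matrix.zero_mul]
  have hPΘ : P * Θ = 0 := by
    rw [← hP.isSymm.eq, ← hΘ.eq, ← transpose_mul, hΘP, transpose_zero]
  have hPH : P * Hᵀ = (1 - Θ) * Hᵀ := by
    conv_rhs => rw [← hP.mul_eq, Matrix.sub_mul, Matrix.one_mul, Matrix.mul_sub,
      ← Matrix.mul_assoc, hPΘ, Matrix.zero_mul, sub_zero]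
  refine ⟨hΘ.add hP.isSymm, ?_, fromRows (Θ - Hᵀ * X) X, ?_⟩
  · rw [mul_fromCols, Matrix.add_mul, Matrix.add_mul, hΘ₂.eq, hPΘ, add_zero, hPH,
      ← Matrix.add_mul, add_sub_cancel, Matrix.one_mul]
  · rw [fromCols_mul_fromRows, hPX, Matrix.mul_sub, hΘ₂.eq, Matrix.sub_mul, Matrix.one_mul,
      Matrix.sub_mul, Matrix.mul_assoc]
    abel

end IsOrthProjOnto

theorem IsMoorePenroseInv.isOrthProjOnto {k b : Type*} [Fintype k] [Fintype b]
    {B : Matrix k b ℝ} {P : Matrix k k ℝ}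
    (hP : IsMoorePenroseInv (B * Bᵀ) P) : IsOrthProjOnto (Bᵀ * P * B) Bᵀ where
  isSymm := by
    have hPs : P.IsSymm := hP.isSymm (by rw [IsSymm, transpose_mul, transpose_transpose])
    rw [IsSymm, transpose_mul, transpose_mul, hPs.eq, transpose_transpose, Matrix.mul_assoc]
  mul_eq := by rw [Matrix.mul_assoc _ B, hP.transpose_mul_mul_gram]
  exists_eq_mul := ⟨P * B, Matrix.mul_assoc _ _ _⟩

theorem isIdempotentElem_diagonal {n α : Type*} [Fintype n] [DecidableEq n]
    [NonUnitalNonAssocSemiring α]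
    {d : n → α} (hd : ∀ i, IsIdempotentElem (d i)) : IsIdempotentElem (diagonal d) := by
  rw [IsIdempotentElem, diagonal_mul_diagonal]
  exact congrArg diagonal (funext hd)

theorem one_sub_transpose_fromRows_mul_mul_fromRows {n m : Type*} [Fintype n] [Fintype m]
    [DecidableEq n] {Θ : Matrix n n ℝ} (hΘ : Θ.IsSymm) (hΘ₂ : IsIdempotentElem Θ)
    (H : Matrix m n ℝ) {M : Matrix (n ⊕ m) (n ⊕ m) ℝ} {K : Matrix m m ℝ}
    (hM : IsMoorePenroseInv (fromRows Θ H * (fromRows Θ H)ᵀ) M)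
    (hK : IsMoorePenroseInv (H * (1 - Θ) * Hᵀ) K) :
    1 - (fromRows Θ H)ᵀ * M * fromRows Θ H = (1 - Θ) - (1 - Θ) * Hᵀ * K * H * (1 - Θ) := by
  have hΘc : (1 - Θ)ᵀ = 1 - Θ := (isSymm_one.sub hΘ).eq
  have hgram : H * (1 - Θ) * (H * (1 - Θ))ᵀ = H * (1 - Θ) * Hᵀ := by
    rw [transpose_mul, hΘc, ← Matrix.mul_assoc, Matrix.mul_assoc H, hΘ₂.one_sub.eq]
  have hA : (fromRows Θ H)ᵀ = fromCols Θ Hᵀ := by rw [transpose_fromRows, hΘ.eq]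
  have hP := hM.isOrthProjOnto
  have hR := (hgram ▸ hK).isOrthProjOnto
  rw [hA] at hP
  rw [transpose_mul, hΘc] at hR
  rw [hA, hP.unique (hR.add_fromCols hΘ hΘ₂)]
  simp only [Matrix.mul_assoc]
  abel

/-- Let `θ ∈ ℝⁿ` have all entries `0` or `1`, `Θ = Diag(θ)`,
`Σ = Iₙ − Θ`.  For any `H ∈ ℝ^{m×n}`,
`Iₙ − [Θ Hᵀ]([Θ; H][Θ Hᵀ])†[Θ; H] = Σ − ΣHᵀ(HΣHᵀ)†HΣ`. -/
theorem stmt_4 {m n : ℕ} (θ : Fin n → ℝ) (hθ : ∀ i, θ i = 0 ∨ θ i = 1)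
    (H : Matrix (Fin m) (Fin n) ℝ)
    (Mdag : Matrix (Fin n ⊕ Fin m) (Fin n ⊕ Fin m) ℝ)
    (hM : IsMoorePenroseInv
      (Matrix.fromRows (Matrix.diagonal θ) H * (Matrix.fromRows (Matrix.diagonal θ) H)ᵀ)
      Mdag)
    (Kdag : Matrix (Fin m) (Fin m) ℝ)
    (hK : IsMoorePenroseInv (H * (1 - Matrix.diagonal θ) * Hᵀ) Kdag) :
    1 - (Matrix.fromRows (Matrix.diagonal θ) H)ᵀ * Mdag * Matrix.fromRows (Matrix.diagonal θ) H
      = (1 - Matrix.diagonal θ) -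
        (1 - Matrix.diagonal θ) * Hᵀ * Kdag * H * (1 - Matrix.diagonal θ) :=
  one_sub_transpose_fromRows_mul_mul_fromRows (isSymm_diagonal θ)
    (isIdempotentElem_diagonal fun i => IsIdempotentElem.iff_eq_zero_or_one.mpr (hθ i)) H hM hK
end

section
/- Given G ∈ ℝ^{n×n}, let Ḡ := Π_{𝔅_n}(G), let Θ^G ∈ ℝ^{n×n} have entries Θ^G_{ij} = 1 if Ḡ_{ij} = 0 and Θ^G_{ij} = 0 otherwise, and define the linear operator Ξ : ℝ^{n×n} → ℝ^{n×n} by Ξ(H) = H − Θ^G ∘ H (entrywise Hadamard product). Then the linear operator 𝒫 : ℝ^{n×n} → ℝ^{n×n} defined by 𝒫(H) := Ξ(H) − Ξ𝓑*(𝓑Ξ𝓑*)†𝓑Ξ(H) is self-adjoint and positive semidefinite with respect to the Frobenius inner product; moreover, under the vectorized representation of 𝔅_n as {x ∈ ℝ^{n²} : x ≥ 0, Bx = b} with B the matrix representation of 𝓑, the matrix representing 𝒫 equals the matrix P₀ := I_{n²} − [I_Θᵀ Bᵀ]([I_Θ; B][I_Θᵀ Bᵀ])†[I_Θ; B], where I_Θ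 = Diag(vec(Θ^G)) is built from the active nonnegativity constraints at vec(Ḡ). -/
open Matrix Filter Topology
open scoped RealInnerProductSpace

/-- The space `ℝ^{n×n}` of square matrices endowed with the Frobenius (Euclidean)
inner product, realized as a Euclidean space indexed by pairs. -/
abbrev MatSp (n : ℕ) := EuclideanSpace ℝ (Fin n × Fin n)

/-- The space `ℝ^{2n}`, realized as a Euclidean space indexed by `Fin n ⊕ Fin n`. -/
abbrev VecSp (n : ℕ) := EuclideanSpace ℝ (Fin n ⊕ Fin n)

/-- The Birkhoff polytope `𝔅ₙ` of doubly stochastic matrices. -/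
def Birkhoff (n : ℕ) : Set (MatSp n) :=
  {X | (∀ i, ∑ j, X (i, j) = 1) ∧ (∀ j, ∑ i, X (i, j) = 1) ∧ ∀ q, 0 ≤ X q}

/-- The linear map `𝓑(X) = [Xe; Xᵀe]`. -/
noncomputable def opB {n : ℕ} (X : MatSp n) : VecSp n :=
  WithLp.toLp 2 (fun s => Sum.elim (fun i => ∑ j, X (i, j)) (fun j => ∑ i, X (i, j)) s)

/-- The adjoint `𝓑*` of `𝓑`: `(𝓑*y)_{ij} = y_i + y_{n+j}`. -/
noncomputable def opBstar {n : ℕ} (y : VecSp n) : MatSp n :=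
  WithLp.toLp 2 (fun (q : Fin n × Fin n) => y (Sum.inl q.1) + y (Sum.inr q.2))

/-- The vector `b = [e; e] ∈ ℝ^{2n}` of all ones. -/
noncomputable def bvec (n : ℕ) : VecSp n := WithLp.toLp 2 (fun _ => (1 : ℝ))

/-- The entrywise projection `Π_C` onto the nonnegative orthant `C`. -/
noncomputable def projC {n : ℕ} (X : MatSp n) : MatSp n := WithLp.toLp 2 (fun q => max (X q) 0)

/-- The dual objective `φ(y) = ½‖Π_C(𝓑*y + G)‖² − ⟨b, y⟩ − ½‖G‖²`. -/
noncomputable def phiObj {n : ℕ} (G : MatSp n) (y : VecSp n) : ℝ :=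
  (1 / 2) * ‖projC (opBstar y + G)‖ ^ 2 - ⟪bvec n, y⟫ - (1 / 2) * ‖G‖ ^ 2

/-- The gradient `∇φ(y) = 𝓑 Π_C(𝓑*y + G) − b`. -/
noncomputable def gradPhi {n : ℕ} (G : MatSp n) (y : VecSp n) : VecSp n :=
  opB (projC (opBstar y + G)) - bvec n

/-- The linear operator `Ξ(H) = H − Θ^G ∘ H`, where `Θ^G_{ij} = 1` iff `Ḡ_{ij} = 0`:
entrywise, `Ξ(H)_{ij} = 0` if `Ḡ_{ij} = 0` and `H_{ij}` otherwise. -/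
noncomputable def XiOp {n : ℕ} (Gbar : MatSp n) (H : MatSp n) : MatSp n :=
  WithLp.toLp 2 (fun q => if Gbar q = 0 then 0 else H q)

/-- The operator `𝓑 Ξ 𝓑* : ℝ^{2n} → ℝ^{2n}`. -/
noncomputable def BXiB {n : ℕ} (Gbar : MatSp n) (v : VecSp n) : VecSp n :=
  opB (XiOp Gbar (opBstar v))

/-- The Moore–Penrose conditions for a (pseudo-inverse) operator `Vdag` of the
self-adjoint operator `V` on `ℝ^{2n}`. -/
def IsMoorePenroseOpInv {n : ℕ} (V Vdag : VecSp n → VecSp n) : Prop :=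
  IsLinearMap ℝ Vdag ∧
  (∀ v, V (Vdag (V v)) = V v) ∧
  (∀ v, Vdag (V (Vdag v)) = Vdag v) ∧
  (∀ u v, ⟪V (Vdag u), v⟫ = ⟪u, V (Vdag v)⟫) ∧
  (∀ u v, ⟪Vdag (V u), v⟫ = ⟪u, Vdag (V v)⟫)

/-- The matrix `B ∈ ℝ^{2n×n²}` representing `𝓑` with respect to vectorization
(matrices in `MatSp n` are already indexed by pairs, so `vec` is the identity). -/
def Bmat (n : ℕ) : Matrix (Fin n ⊕ Fin n) (Fin n × Fin n) ℝ :=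
  fun s q => Sum.elim (fun i => if q.1 = i then 1 else 0) (fun j => if q.2 = j then 1 else 0) s

/-- The diagonal matrix `I_Θ = Diag(vec(Θ^G))` of active nonnegativity constraints at
`vec(Ḡ)`. -/
noncomputable def ITheta {n : ℕ} (Gbar : MatSp n) : Matrix (Fin n × Fin n) (Fin n × Fin n) ℝ :=
  Matrix.diagonal fun q => if Gbar q = 0 then 1 else 0

/-- The stacked matrix `[I_Θ; B]`. -/
noncomputable def stackIB {n : ℕ} (Gbar : MatSp n) :
    Matrix ((Fin n × Fin n) ⊕ (Fin n ⊕ Fin n)) (Fin n × Fin n) ℝ :=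
  Matrix.fromRows (ITheta Gbar) (Bmat n)

section AuxStmt5

/-- Apply a square matrix to a Euclidean-space vector. -/
noncomputable def matApply {k : Type*} [Fintype k] (A : Matrix k k ℝ)
    (x : EuclideanSpace ℝ k) : EuclideanSpace ℝ k :=
  WithLp.toLp 2 (fun i => ∑ j, A i j * x j)

lemma esp_inner {k : Type*} [Fintype k] (x y : EuclideanSpace ℝ k) :
    ⟪x, y⟫ = ∑ i, x i * y i := by
  simp [PiLp.inner_apply, RCLike.inner_apply, starRingEnd_apply]
  exact Finset.sum_congr rfl fun _ _ => mul_comm _ _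

lemma adjB {n : ℕ} (X : MatSp n) (y : VecSp n) : ⟪opB X, y⟫ = ⟪X, opBstar y⟫ := by
  simp only [esp_inner, opB, opBstar, PiLp.toLp_apply, Fintype.sum_sum_type, Fintype.sum_prod_type,
    Sum.elim_inl, Sum.elim_inr, Finset.sum_mul, mul_add, Finset.sum_add_distrib]
  congr 1
  exact Finset.sum_comm

lemma Xi_idem {n : ℕ} (Gbar X : MatSp n) : XiOp Gbar (XiOp Gbar X) = XiOp Gbar X := by
  ext q; simp only [XiOp, PiLp.toLp_apply]; split <;> rfl

lemma Xi_sa {n : ℕ} (Gbar X Y : MatSp n) : ⟪XiOp Gbar X, Y⟫ = ⟪X, XiOp Gbar Y⟫ := by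
  simp only [esp_inner, XiOp, PiLp.toLp_apply]
  exact Finset.sum_congr rfl fun q _ => by split <;> ring

lemma XiXi {n : ℕ} (Gbar Z Z' : MatSp n) :
    ⟪XiOp Gbar Z, Z'⟫ = ⟪XiOp Gbar Z, XiOp Gbar Z'⟫ := by
  calc ⟪XiOp Gbar Z, Z'⟫ = ⟪XiOp Gbar (XiOp Gbar Z), Z'⟫ := by rw [Xi_idem]
  _ = ⟪XiOp Gbar Z, XiOp Gbar Z'⟫ := Xi_sa _ _ _

lemma adjA {n : ℕ} (Gbar X : MatSp n) (y : VecSp n) :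
    ⟪opB (XiOp Gbar X), y⟫ = ⟪X, XiOp Gbar (opBstar y)⟫ := by
  rw [adjB, Xi_sa]

lemma V_sa {n : ℕ} (Gbar : MatSp n) (u v : VecSp n) :
    ⟪BXiB Gbar u, v⟫ = ⟪u, BXiB Gbar v⟫ := by
  calc ⟪BXiB Gbar u, v⟫ = ⟪opBstar u, XiOp Gbar (opBstar v)⟫ := adjA _ _ _
  _ = ⟪XiOp Gbar (opBstar u), opBstar v⟫ := (Xi_sa _ _ _).symm
  _ = ⟪opBstar v, XiOp Gbar (opBstar u)⟫ := real_inner_comm _ _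
  _ = ⟪BXiB Gbar v, u⟫ := (adjA _ _ _).symm
  _ = ⟪u, BXiB Gbar v⟫ := real_inner_comm _ _

lemma opBstar_zero {n : ℕ} : opBstar (0 : VecSp n) = 0 := by
  ext q; simp [opBstar]

lemma Xi_zero {n : ℕ} (Gbar : MatSp n) : XiOp Gbar (0 : MatSp n) = 0 := by
  ext q; simp only [XiOp, PiLp.toLp_apply]; split <;> rfl

lemma opB_zero {n : ℕ} : opB (0 : MatSp n) = 0 := by
  ext s; cases s <;> simp [opB]

lemma V_zero {n : ℕ} (Gbar : MatSp n) : BXiB Gbar (0 : VecSp n) = 0 := by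
  rw [BXiB, opBstar_zero, Xi_zero, opB_zero]

lemma opB_sub {n : ℕ} (X Y : MatSp n) : opB (X - Y) = opB X - opB Y := by
  ext s; cases s <;> simp [opB, Finset.sum_sub_distrib]

lemma key {n : ℕ} (Gbar : MatSp n) (Vdag : VecSp n → VecSp n)
    (hVdag : IsMoorePenroseOpInv (BXiB Gbar) Vdag) (H : MatSp n) :
    BXiB Gbar (Vdag (opB (XiOp Gbar H))) = opB (XiOp Gbar H) := by
  obtain ⟨hlin, h2, h3, h4, h5⟩ := hVdag
  set u : VecSp n := opB (XiOp Gbar H) with hu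
  set c : VecSp n := u - BXiB Gbar (Vdag u) with hc
  have hQsa : ∀ z w : VecSp n,
      ⟪z - BXiB Gbar (Vdag z), w⟫ = ⟪z, w - BXiB Gbar (Vdag w)⟫ := by
    intro z w
    rw [inner_sub_left, inner_sub_right, h4]
  have hVdc : Vdag c = 0 := by
    rw [hc, hlin.map_sub, h3 u, sub_self]
  have hVc : BXiB Gbar (Vdag c) = 0 := by rw [hVdc, V_zero]
  have hQV : ∀ z : VecSp n, BXiB Gbar z - BXiB Gbar (Vdag (BXiB Gbar z)) = 0 := by
    intro z; rw [h2 z, sub_self]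
  have hbc : ⟪BXiB Gbar c, c⟫ = 0 := by
    calc ⟪BXiB Gbar c, c⟫ = ⟪c, BXiB Gbar c⟫ := real_inner_comm _ _
    _ = ⟪u - BXiB Gbar (Vdag u), BXiB Gbar c⟫ := by rw [hc]
    _ = ⟪u, BXiB Gbar c - BXiB Gbar (Vdag (BXiB Gbar c))⟫ := hQsa _ _
    _ = 0 := by rw [hQV c, inner_zero_right]
  have hAc : XiOp Gbar (opBstar c) = 0 := by
    rw [← inner_self_eq_zero (𝕜 := ℝ)]
    calc ⟪XiOp Gbar (opBstar c), XiOp Gbar (opBstar c)⟫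
        = ⟪XiOp Gbar (opBstar c), opBstar c⟫ := (XiXi _ _ _).symm
    _ = ⟪opB (XiOp Gbar (opBstar c)), c⟫ := (adjB _ _).symm
    _ = ⟪BXiB Gbar c, c⟫ := rfl
    _ = 0 := hbc
  have hcc : ⟪c, c⟫ = 0 := by
    calc ⟪c, c⟫ = ⟪u - BXiB Gbar (Vdag u), c⟫ := by rw [← hc]
    _ = ⟪u, c - BXiB Gbar (Vdag c)⟫ := hQsa _ _
    _ = ⟪u, c⟫ := by rw [hVc, sub_zero]
    _ = ⟪opB (XiOp Gbar H), c⟫ := by rw [hu]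
    _ = ⟪H, XiOp Gbar (opBstar c)⟫ := adjA _ _ _
    _ = 0 := by rw [hAc, inner_zero_right]
  have h0 : c = 0 := inner_self_eq_zero.mp hcc
  exact (sub_eq_zero.mp (hc ▸ h0)).symm

lemma Vdag_symm {n : ℕ} (Gbar : MatSp n) (Vdag : VecSp n → VecSp n)
    (hVdag : IsMoorePenroseOpInv (BXiB Gbar) Vdag) (H₁ H₂ : MatSp n) :
    ⟪Vdag (opB (XiOp Gbar H₁)), opB (XiOp Gbar H₂)⟫
      = ⟪opB (XiOp Gbar H₁), Vdag (opB (XiOp Gbar H₂))⟫ := by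
  calc ⟪Vdag (opB (XiOp Gbar H₁)), opB (XiOp Gbar H₂)⟫
      = ⟪Vdag (opB (XiOp Gbar H₁)), BXiB Gbar (Vdag (opB (XiOp Gbar H₂)))⟫ := by
        rw [key Gbar Vdag hVdag H₂]
  _ = ⟪BXiB Gbar (Vdag (opB (XiOp Gbar H₁))), Vdag (opB (XiOp Gbar H₂))⟫ := (V_sa _ _ _).symm
  _ = ⟪opB (XiOp Gbar H₁), Vdag (opB (XiOp Gbar H₂))⟫ := by rw [key Gbar Vdag hVdag H₁]

lemma Psa {n : ℕ} (Gbar : MatSp n) (Vdag : VecSp n → VecSp n)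
    (hVdag : IsMoorePenroseOpInv (BXiB Gbar) Vdag) (H₁ H₂ : MatSp n) :
    ⟪XiOp Gbar H₁ - XiOp Gbar (opBstar (Vdag (opB (XiOp Gbar H₁)))), H₂⟫
      = ⟪H₁, XiOp Gbar H₂ - XiOp Gbar (opBstar (Vdag (opB (XiOp Gbar H₂))))⟫ := by
  rw [inner_sub_left, inner_sub_right, Xi_sa]
  congr 1
  calc ⟪XiOp Gbar (opBstar (Vdag (opB (XiOp Gbar H₁)))), H₂⟫
      = ⟪opBstar (Vdag (opB (XiOp Gbar H₁))), XiOp Gbar H₂⟫ := Xi_sa _ _ _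
  _ = ⟪XiOp Gbar H₂, opBstar (Vdag (opB (XiOp Gbar H₁)))⟫ := real_inner_comm _ _
  _ = ⟪opB (XiOp Gbar H₂), Vdag (opB (XiOp Gbar H₁))⟫ := (adjB _ _).symm
  _ = ⟪Vdag (opB (XiOp Gbar H₁)), opB (XiOp Gbar H₂)⟫ := real_inner_comm _ _
  _ = ⟪opB (XiOp Gbar H₁), Vdag (opB (XiOp Gbar H₂))⟫ := Vdag_symm Gbar Vdag hVdag H₁ H₂
  _ = ⟪XiOp Gbar H₁, opBstar (Vdag (opB (XiOp Gbar H₂)))⟫ := adjB _ _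
  _ = ⟪H₁, XiOp Gbar (opBstar (Vdag (opB (XiOp Gbar H₂))))⟫ := Xi_sa _ _ _

lemma Ppsd_aux {n : ℕ} (Gbar H : MatSp n) (y : VecSp n)
    (hkey : BXiB Gbar y = opB (XiOp Gbar H)) :
    0 ≤ ⟪H, XiOp Gbar H - XiOp Gbar (opBstar y)⟫ := by
  have h1 : ⟪XiOp Gbar H, XiOp Gbar (opBstar y)⟫
      = ⟪XiOp Gbar (opBstar y), XiOp Gbar (opBstar y)⟫ := by
    calc ⟪XiOp Gbar H, XiOp Gbar (opBstar y)⟫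
        = ⟪XiOp Gbar H, opBstar y⟫ := (XiXi _ _ _).symm
    _ = ⟪opB (XiOp Gbar H), y⟫ := (adjB _ _).symm
    _ = ⟪BXiB Gbar y, y⟫ := by rw [hkey]
    _ = ⟪opB (XiOp Gbar (opBstar y)), y⟫ := rfl
    _ = ⟪XiOp Gbar (opBstar y), opBstar y⟫ := adjB _ _
    _ = ⟪XiOp Gbar (opBstar y), XiOp Gbar (opBstar y)⟫ := XiXi _ _ _
  have h2 : ⟪H, XiOp Gbar (opBstar y)⟫
      = ⟪XiOp Gbar (opBstar y), XiOp Gbar (opBstar y)⟫ := by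
    calc ⟪H, XiOp Gbar (opBstar y)⟫
        = ⟪XiOp Gbar H, opBstar y⟫ := (Xi_sa _ _ _).symm
    _ = ⟪XiOp Gbar H, XiOp Gbar (opBstar y)⟫ := XiXi _ _ _
    _ = ⟪XiOp Gbar (opBstar y), XiOp Gbar (opBstar y)⟫ := h1
  have h3 : ⟪H, XiOp Gbar H⟫ = ⟪XiOp Gbar H, XiOp Gbar H⟫ := by
    calc ⟪H, XiOp Gbar H⟫ = ⟪XiOp Gbar H, H⟫ := real_inner_comm _ _
    _ = ⟪XiOp Gbar H, XiOp Gbar H⟫ := XiXi _ _ _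
  have h4 : ⟪XiOp Gbar (opBstar y), XiOp Gbar H⟫
      = ⟪XiOp Gbar (opBstar y), XiOp Gbar (opBstar y)⟫ := by
    rw [real_inner_comm]; exact h1
  have key2 : ⟪H, XiOp Gbar H - XiOp Gbar (opBstar y)⟫
      = ⟪XiOp Gbar H - XiOp Gbar (opBstar y), XiOp Gbar H - XiOp Gbar (opBstar y)⟫ := by
    rw [inner_sub_right, inner_sub_left, inner_sub_right, inner_sub_right]
    linarith [h1, h2, h3, h4]
  rw [key2]
  exact real_inner_self_nonneg

lemma mp_unique {k : Type*} [Fintype k] {N P Q : Matrix k k ℝ}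
    (hP : IsMoorePenroseInv N P) (hQ : IsMoorePenroseInv N Q) : P = Q := by
  obtain ⟨hP1, hP2, hP3, hP4⟩ := hP
  obtain ⟨hQ1, hQ2, hQ3, hQ4⟩ := hQ
  have e1 : P = P * Pᵀ * Nᵀ := by
    calc P = P * N * P := hP2.symm
    _ = P * (N * P)ᵀ := by rw [hP3, Matrix.mul_assoc]
    _ = P * (Pᵀ * Nᵀ) := by rw [Matrix.transpose_mul]
    _ = P * Pᵀ * Nᵀ := by rw [Matrix.mul_assoc]
  have e2 : P = P * N * Q := by
    calc P = P * Pᵀ * Nᵀ := e1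
    _ = P * Pᵀ * (N * Q * N)ᵀ := by rw [hQ1]
    _ = P * Pᵀ * (Nᵀ * (N * Q)ᵀ) := by rw [Matrix.transpose_mul]
    _ = (P * Pᵀ * Nᵀ) * (N * Q)ᵀ := by simp only [Matrix.mul_assoc]
    _ = P * (N * Q) := by rw [← e1, hQ3]
    _ = P * N * Q := by rw [Matrix.mul_assoc]
  have f1 : Q = Nᵀ * Qᵀ * Q := by
    calc Q = Q * N * Q := hQ2.symm
    _ = (Q * N)ᵀ * Q := by rw [hQ4]
    _ = Nᵀ * Qᵀ * Q := by rw [Matrix.transpose_mul]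
  have f2 : Q = P * N * Q := by
    calc Q = Nᵀ * Qᵀ * Q := f1
    _ = (N * P * N)ᵀ * Qᵀ * Q := by rw [hP1]
    _ = (Nᵀ * (N * P)ᵀ) * Qᵀ * Q := by rw [Matrix.transpose_mul]
    _ = (Nᵀ * (Pᵀ * Nᵀ)) * Qᵀ * Q := by rw [Matrix.transpose_mul]
    _ = Nᵀ * Pᵀ * (Nᵀ * Qᵀ * Q) := by simp only [Matrix.mul_assoc]
    _ = Nᵀ * Pᵀ * Q := by rw [← f1]
    _ = (P * N)ᵀ * Q := by rw [Matrix.transpose_mul]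
    _ = P * N * Q := by rw [hP4]
  exact e2.trans f2.symm

lemma mp_symm {k : Type*} [Fintype k] {M Mdag : Matrix k k ℝ} (hM : Mᵀ = M)
    (h : IsMoorePenroseInv M Mdag) : Mdagᵀ = Mdag := by
  obtain ⟨h1, h2, h3, h4⟩ := h
  have hT : IsMoorePenroseInv M Mdagᵀ := by
    refine ⟨?_, ?_, ?_, ?_⟩
    · calc M * Mdagᵀ * M = Mᵀ * Mdagᵀ * Mᵀ := by rw [hM]
      _ = (Mdag * M)ᵀ * Mᵀ := by rw [Matrix.transpose_mul]
      _ = (M * (Mdag * M))ᵀ := by simp only [Matrix.transpose_mul, Matrix.mul_assoc]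
      _ = (M * Mdag * M)ᵀ := by rw [Matrix.mul_assoc]
      _ = Mᵀ := by rw [h1]
      _ = M := hM
    · calc Mdagᵀ * M * Mdagᵀ = Mdagᵀ * Mᵀ * Mdagᵀ := by rw [hM]
      _ = (M * Mdag)ᵀ * Mdagᵀ := by rw [Matrix.transpose_mul]
      _ = (Mdag * (M * Mdag))ᵀ := by simp only [Matrix.transpose_mul, Matrix.mul_assoc]
      _ = (Mdag * M * Mdag)ᵀ := by rw [Matrix.mul_assoc]
      _ = Mdagᵀ := by rw [h2]
    · calc (M * Mdagᵀ)ᵀ = Mdag * Mᵀ := by rw [Matrix.transpose_mul, Matrix.transpose_transpose]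
      _ = Mdag * M := by rw [hM]
      _ = (Mdag * M)ᵀ := h4.symm
      _ = Mᵀ * Mdagᵀ := by rw [Matrix.transpose_mul]
      _ = M * Mdagᵀ := by rw [hM]
    · calc (Mdagᵀ * M)ᵀ = Mᵀ * Mdag := by rw [Matrix.transpose_mul, Matrix.transpose_transpose]
      _ = M * Mdag := by rw [hM]
      _ = (M * Mdag)ᵀ := h3.symm
      _ = Mdagᵀ * Mᵀ := by rw [Matrix.transpose_mul]
      _ = Mdagᵀ * M := by rw [hM]
  exact mp_unique hT ⟨h1, h2, h3, h4⟩

lemma MMdagS {k K : Type*} [Fintype k] [Fintype K] [DecidableEq K] {S : Matrix K k ℝ}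
    {Mdag : Matrix K K ℝ} (h : IsMoorePenroseInv (S * Sᵀ) Mdag) :
    S * Sᵀ * Mdag * S = S := by
  obtain ⟨h1, h2, h3, h4⟩ := h
  set Q := (1 : Matrix K K ℝ) - S * Sᵀ * Mdag with hQ
  have hQM : Q * (S * Sᵀ) = 0 := by
    rw [hQ, Matrix.sub_mul, Matrix.one_mul]
    simp only [Matrix.mul_assoc] at h1 ⊢
    rw [h1, sub_self]
  have hQT : Qᵀ = Q := by
    rw [hQ, Matrix.transpose_sub, Matrix.transpose_one, h3]
  have h0 : (Q * S) * (Q * S)ᵀ = 0 := by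
    calc (Q * S) * (Q * S)ᵀ = Q * S * (Sᵀ * Qᵀ) := by rw [Matrix.transpose_mul]
    _ = Q * (S * Sᵀ) * Qᵀ := by simp only [Matrix.mul_assoc]
    _ = 0 := by rw [hQM, Matrix.zero_mul]
  have hQS : Q * S = 0 := by
    rw [← Matrix.conjTranspose_eq_transpose_of_trivial] at h0
    exact Matrix.self_mul_conjTranspose_eq_zero.mp h0
  have hs : S - S * Sᵀ * Mdag * S = 0 := by
    have hqs : Q * S = (1 : Matrix K K ℝ) * S - S * Sᵀ * Mdag * S := by
      rw [hQ, Matrix.sub_mul]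
    rw [Matrix.one_mul] at hqs
    rw [← hqs]; exact hQS
  exact (sub_eq_zero.mp hs).symm

lemma symmat_sa {k : Type*} [Fintype k] (A : Matrix k k ℝ) (hA : Aᵀ = A)
    (x y : EuclideanSpace ℝ k) :
    ⟪matApply A x, y⟫ = ⟪x, matApply A y⟫ := by
  simp only [esp_inner, matApply, PiLp.toLp_apply, Finset.sum_mul, Finset.mul_sum]
  rw [Finset.sum_comm]
  refine Finset.sum_congr rfl fun a _ => Finset.sum_congr rfl fun b _ => ?_
  have h' : A b a = A a b := congrFun (congrFun hA a) b
  rw [h']; ring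

lemma Bmat_row {n : ℕ} (x : MatSp n) (s : Fin n ⊕ Fin n) :
    opB x s = ∑ q, Bmat n s q * x q := by
  cases s with
  | inl i =>
    rw [show opB x (Sum.inl i) = ∑ j, x (i, j) from rfl]
    rw [Fintype.sum_prod_type]
    simp only [Bmat, Sum.elim_inl, ite_mul, one_mul, zero_mul]
    rw [Finset.sum_comm]
    simp
  | inr j =>
    rw [show opB x (Sum.inr j) = ∑ i, x (i, j) from rfl]
    rw [Fintype.sum_prod_type]
    simp only [Bmat, Sum.elim_inr, ite_mul, one_mul, zero_mul]
    rw [Finset.sum_comm]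
    simp

lemma stack_row_zero {n : ℕ} (Gbar : MatSp n) (x : MatSp n)
    (hact : ∀ q, Gbar q = 0 → x q = 0) (hB : opB x = 0)
    (r : (Fin n × Fin n) ⊕ (Fin n ⊕ Fin n)) :
    ∑ q', stackIB Gbar r q' * x q' = 0 := by
  cases r with
  | inl q =>
    have : ∀ q', stackIB Gbar (Sum.inl q) q' = ITheta Gbar q q' := fun q' => rfl
    simp only [this, ITheta, Matrix.diagonal_apply, ite_mul, zero_mul]
    rw [Finset.sum_ite_eq]
    by_cases hq : Gbar q = 0
    · simp [hq, hact q hq]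
    · simp [hq]
  | inr s =>
    have : ∀ q', stackIB Gbar (Sum.inr s) q' = Bmat n s q' := fun q' => rfl
    simp only [this]
    rw [← Bmat_row, hB]
    rfl

end AuxStmt5

section AuxStmt5b

noncomputable def P0mat {n : ℕ} (Gbar : MatSp n)
    (Mdag : Matrix ((Fin n × Fin n) ⊕ (Fin n ⊕ Fin n)) ((Fin n × Fin n) ⊕ (Fin n ⊕ Fin n)) ℝ) :
    Matrix (Fin n × Fin n) (Fin n × Fin n) ℝ :=
  (1 : Matrix (Fin n × Fin n) (Fin n × Fin n) ℝ) - (stackIB Gbar)ᵀ * Mdag * stackIB Gbar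

lemma P0mat_symm {n : ℕ} (Gbar : MatSp n)
    (Mdag : Matrix ((Fin n × Fin n) ⊕ (Fin n ⊕ Fin n)) ((Fin n × Fin n) ⊕ (Fin n ⊕ Fin n)) ℝ)
    (hMdag : IsMoorePenroseInv (stackIB Gbar * (stackIB Gbar)ᵀ) Mdag) :
    (P0mat Gbar Mdag)ᵀ = P0mat Gbar Mdag := by
  have hM : (stackIB Gbar * (stackIB Gbar)ᵀ)ᵀ = stackIB Gbar * (stackIB Gbar)ᵀ := by
    rw [Matrix.transpose_mul, Matrix.transpose_transpose]
  have hd := mp_symm hM hMdag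
  simp only [P0mat, Matrix.transpose_sub, Matrix.transpose_one, Matrix.transpose_mul,
    Matrix.transpose_transpose, hd, Matrix.mul_assoc]

lemma SP0 {n : ℕ} (Gbar : MatSp n)
    (Mdag : Matrix ((Fin n × Fin n) ⊕ (Fin n ⊕ Fin n)) ((Fin n × Fin n) ⊕ (Fin n ⊕ Fin n)) ℝ)
    (hMdag : IsMoorePenroseInv (stackIB Gbar * (stackIB Gbar)ᵀ) Mdag) :
    stackIB Gbar * P0mat Gbar Mdag = 0 := by
  rw [P0mat, Matrix.mul_sub, Matrix.mul_one]
  have h := MMdagS hMdag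
  simp only [Matrix.mul_assoc] at h ⊢
  rw [h, sub_self]

lemma P0row_zero {n : ℕ} (Gbar : MatSp n)
    (Mdag : Matrix ((Fin n × Fin n) ⊕ (Fin n ⊕ Fin n)) ((Fin n × Fin n) ⊕ (Fin n ⊕ Fin n)) ℝ)
    (hMdag : IsMoorePenroseInv (stackIB Gbar * (stackIB Gbar)ᵀ) Mdag)
    (q q' : Fin n × Fin n) (hq : Gbar q = 0) : P0mat Gbar Mdag q q' = 0 := by
  have h := congrFun (congrFun (SP0 Gbar Mdag hMdag) (Sum.inl q)) q'
  rw [Matrix.mul_apply] at h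
  have hrow : ∀ x, stackIB Gbar (Sum.inl q) x = ITheta Gbar q x := fun _ => rfl
  simp only [hrow, ITheta, Matrix.diagonal_apply, ite_mul, zero_mul, Matrix.zero_apply] at h
  rw [Finset.sum_ite_eq] at h
  simpa [hq] using h

lemma P0_active {n : ℕ} (Gbar : MatSp n)
    (Mdag : Matrix ((Fin n × Fin n) ⊕ (Fin n ⊕ Fin n)) ((Fin n × Fin n) ⊕ (Fin n ⊕ Fin n)) ℝ)
    (hMdag : IsMoorePenroseInv (stackIB Gbar * (stackIB Gbar)ᵀ) Mdag)
    (H : MatSp n) (q : Fin n × Fin n) (hq : Gbar q = 0) :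
    (∑ q', P0mat Gbar Mdag q q' * H q') = 0 := by
  have : ∀ q', P0mat Gbar Mdag q q' * H q' = 0 := fun q' => by
    rw [P0row_zero Gbar Mdag hMdag q q' hq, zero_mul]
  simp [this]

lemma P0_B {n : ℕ} (Gbar : MatSp n)
    (Mdag : Matrix ((Fin n × Fin n) ⊕ (Fin n ⊕ Fin n)) ((Fin n × Fin n) ⊕ (Fin n ⊕ Fin n)) ℝ)
    (hMdag : IsMoorePenroseInv (stackIB Gbar * (stackIB Gbar)ᵀ) Mdag) (H : MatSp n) :
    opB (matApply (P0mat Gbar Mdag) H) = 0 := by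
  ext s
  rw [Bmat_row]
  simp only [matApply, PiLp.toLp_apply]
  have hswap : ∑ q, Bmat n s q * (∑ q', P0mat Gbar Mdag q q' * H q')
      = ∑ q', (∑ q, Bmat n s q * P0mat Gbar Mdag q q') * H q' := by
    simp only [Finset.mul_sum, Finset.sum_mul]
    rw [Finset.sum_comm]
    exact Finset.sum_congr rfl fun q' _ => Finset.sum_congr rfl fun q _ =>
      (mul_assoc _ _ _).symm
  rw [hswap]
  have hz : ∀ q', ∑ q, Bmat n s q * P0mat Gbar Mdag q q' = 0 := by
    intro q'
    have h := congrFun (congrFun (SP0 Gbar Mdag hMdag) (Sum.inr s)) q'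
    rw [Matrix.mul_apply] at h
    have hrow : ∀ x, stackIB Gbar (Sum.inr s) x = Bmat n s x := fun _ => rfl
    simpa only [hrow, Matrix.zero_apply] using h
  simp [hz]

lemma P0_fix {n : ℕ} (Gbar : MatSp n)
    (Mdag : Matrix ((Fin n × Fin n) ⊕ (Fin n ⊕ Fin n)) ((Fin n × Fin n) ⊕ (Fin n ⊕ Fin n)) ℝ)
    (x : MatSp n) (hact : ∀ q, Gbar q = 0 → x q = 0) (hB : opB x = 0) :
    matApply (P0mat Gbar Mdag) x = x := by
  ext q
  simp only [matApply, PiLp.toLp_apply]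
  have expand : ∀ q', P0mat Gbar Mdag q q'
      = (if q = q' then (1:ℝ) else 0) - ((stackIB Gbar)ᵀ * Mdag * stackIB Gbar) q q' := by
    intro q'
    simp [P0mat, Matrix.sub_apply, Matrix.one_apply]
  have hT : ∑ q', ((stackIB Gbar)ᵀ * Mdag * stackIB Gbar) q q' * x q' = 0 := by
    have hTq : ∀ q', ((stackIB Gbar)ᵀ * Mdag * stackIB Gbar) q q'
        = ∑ r, ((stackIB Gbar)ᵀ * Mdag) q r * stackIB Gbar r q' := fun q' => Matrix.mul_apply
    simp only [hTq, Finset.sum_mul]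
    rw [Finset.sum_comm]
    have hr : ∀ r, (∑ q', ((stackIB Gbar)ᵀ * Mdag) q r * stackIB Gbar r q' * x q') = 0 := by
      intro r
      calc ∑ q', ((stackIB Gbar)ᵀ * Mdag) q r * stackIB Gbar r q' * x q'
          = ((stackIB Gbar)ᵀ * Mdag) q r * ∑ q', stackIB Gbar r q' * x q' := by
            rw [Finset.mul_sum]
            exact Finset.sum_congr rfl fun _ _ => (mul_assoc _ _ _)
      _ = 0 := by rw [stack_row_zero Gbar x hact hB r, mul_zero]
    simp [hr]
  simp only [expand, sub_mul, Finset.sum_sub_distrib, ite_mul, one_mul, zero_mul,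
    Finset.sum_ite_eq, Finset.mem_univ, if_true, hT, sub_zero]

lemma P_active {n : ℕ} (Gbar H Z : MatSp n) (q : Fin n × Fin n) (hq : Gbar q = 0) :
    (XiOp Gbar H - XiOp Gbar Z) q = 0 := by
  have : (XiOp Gbar H - XiOp Gbar Z) q = XiOp Gbar H q - XiOp Gbar Z q := rfl
  rw [this]
  simp [XiOp, hq]

lemma P_B {n : ℕ} (Gbar : MatSp n) (Vdag : VecSp n → VecSp n)
    (hVdag : IsMoorePenroseOpInv (BXiB Gbar) Vdag) (H : MatSp n) :
    opB (XiOp Gbar H - XiOp Gbar (opBstar (Vdag (opB (XiOp Gbar H))))) = 0 := by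
  have hk := key Gbar Vdag hVdag H
  rw [opB_sub,
    show opB (XiOp Gbar (opBstar (Vdag (opB (XiOp Gbar H)))))
      = BXiB Gbar (Vdag (opB (XiOp Gbar H))) from rfl, hk, sub_self]

lemma P_fix {n : ℕ} (Gbar : MatSp n) (Vdag : VecSp n → VecSp n)
    (hlin : IsLinearMap ℝ Vdag) (x : MatSp n)
    (hact : ∀ q, Gbar q = 0 → x q = 0) (hB : opB x = 0) :
    XiOp Gbar x - XiOp Gbar (opBstar (Vdag (opB (XiOp Gbar x)))) = x := by
  have hXx : XiOp Gbar x = x := by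
    ext q
    simp only [XiOp, PiLp.toLp_apply]
    split
    · exact (hact q (by assumption)).symm
    · rfl
  rw [hXx, hB, hlin.map_zero, opBstar_zero, Xi_zero, sub_zero]

end AuxStmt5b

/-- Proposition 3.1: the HS-Jacobian operator
`𝒫(H) = Ξ(H) − Ξ𝓑*(𝓑Ξ𝓑*)†𝓑Ξ(H)` of `Π_{𝔅ₙ}` at `G` is self-adjoint and positive
semidefinite with respect to the Frobenius inner product, and its matrix representation
equals `P₀ = I_{n²} − [I_Θᵀ Bᵀ]([I_Θ; B][I_Θᵀ Bᵀ])†[I_Θ; B]`. -/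
theorem stmt_5 (n : ℕ) (G Gbar : MatSp n)
    (hGbar : Gbar ∈ Birkhoff n ∧ ∀ V ∈ Birkhoff n, ‖G - Gbar‖ ≤ ‖G - V‖)
    (Vdag : VecSp n → VecSp n)
    (hVdag : IsMoorePenroseOpInv (BXiB Gbar) Vdag)
    (Mdag : Matrix ((Fin n × Fin n) ⊕ (Fin n ⊕ Fin n)) ((Fin n × Fin n) ⊕ (Fin n ⊕ Fin n)) ℝ)
    (hMdag : IsMoorePenroseInv (stackIB Gbar * (stackIB Gbar)ᵀ) Mdag) :
    (∀ H₁ H₂ : MatSp n,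
      ⟪XiOp Gbar H₁ - XiOp Gbar (opBstar (Vdag (opB (XiOp Gbar H₁)))), H₂⟫
        = ⟪H₁, XiOp Gbar H₂ - XiOp Gbar (opBstar (Vdag (opB (XiOp Gbar H₂))))⟫) ∧
    (∀ H : MatSp n,
      0 ≤ ⟪H, XiOp Gbar H - XiOp Gbar (opBstar (Vdag (opB (XiOp Gbar H))))⟫) ∧
    ∀ (H : MatSp n) (q : Fin n × Fin n),
      (XiOp Gbar H - XiOp Gbar (opBstar (Vdag (opB (XiOp Gbar H))))) q
        = ∑ q', ((1 : Matrix (Fin n × Fin n) (Fin n × Fin n) ℝ) -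
            (stackIB Gbar)ᵀ * Mdag * stackIB Gbar) q q' * H q' := by
  refine ⟨Psa Gbar Vdag hVdag, fun H => Ppsd_aux Gbar H _ (key Gbar Vdag hVdag H), ?_⟩
  intro H q
  have hsym := P0mat_symm Gbar Mdag hMdag
  have c1 : matApply (P0mat Gbar Mdag)
      (XiOp Gbar H - XiOp Gbar (opBstar (Vdag (opB (XiOp Gbar H)))))
      = XiOp Gbar H - XiOp Gbar (opBstar (Vdag (opB (XiOp Gbar H)))) :=
    P0_fix Gbar Mdag _ (fun q' hq' => P_active Gbar H _ q' hq') (P_B Gbar Vdag hVdag H)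
  have c2 : ∀ X : MatSp n,
      XiOp Gbar (matApply (P0mat Gbar Mdag) X) -
        XiOp Gbar (opBstar (Vdag (opB (XiOp Gbar (matApply (P0mat Gbar Mdag) X)))))
      = matApply (P0mat Gbar Mdag) X := by
    intro X
    exact P_fix Gbar Vdag hVdag.1 _
      (fun q' hq' => P0_active Gbar Mdag hMdag X q' hq')
      (P0_B Gbar Mdag hMdag X)
  have hmain : ∀ H₂ : MatSp n,
      ⟪XiOp Gbar H - XiOp Gbar (opBstar (Vdag (opB (XiOp Gbar H)))), H₂⟫
        = ⟪matApply (P0mat Gbar Mdag) H, H₂⟫ := by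
    intro H₂
    calc ⟪XiOp Gbar H - XiOp Gbar (opBstar (Vdag (opB (XiOp Gbar H)))), H₂⟫
        = ⟪matApply (P0mat Gbar Mdag)
            (XiOp Gbar H - XiOp Gbar (opBstar (Vdag (opB (XiOp Gbar H))))), H₂⟫ := by
          rw [c1]
    _ = ⟪XiOp Gbar H - XiOp Gbar (opBstar (Vdag (opB (XiOp Gbar H)))),
          matApply (P0mat Gbar Mdag) H₂⟫ :=
        symmat_sa (P0mat Gbar Mdag) hsym _ _
    _ = ⟪H, XiOp Gbar (matApply (P0mat Gbar Mdag) H₂) -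
          XiOp Gbar (opBstar (Vdag (opB (XiOp Gbar (matApply (P0mat Gbar Mdag) H₂)))))⟫ :=
        Psa Gbar Vdag hVdag H _
    _ = ⟪H, matApply (P0mat Gbar Mdag) H₂⟫ := by rw [c2 H₂]
    _ = ⟪matApply (P0mat Gbar Mdag) H, H₂⟫ :=
        (symmat_sa (P0mat Gbar Mdag) hsym _ _).symm
  have hdd : ⟪(XiOp Gbar H - XiOp Gbar (opBstar (Vdag (opB (XiOp Gbar H))))) -
      matApply (P0mat Gbar Mdag) H,
      (XiOp Gbar H - XiOp Gbar (opBstar (Vdag (opB (XiOp Gbar H))))) -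
      matApply (P0mat Gbar Mdag) H⟫ = 0 := by
    rw [inner_sub_left, hmain, sub_self]
  have hPP0 : XiOp Gbar H - XiOp Gbar (opBstar (Vdag (opB (XiOp Gbar H))))
      = matApply (P0mat Gbar Mdag) H :=
    sub_eq_zero.mp (inner_self_eq_zero.mp hdd)
  rw [hPP0]
  rfl
end
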